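/- arXiv:1707.09027 — 2 statements merged into one kernel-verified Lean document; each statement's English description precedes it below -/
import Mathlib

section
/- A P-group G is functionally balanced if and only if it is strongly functionally balanced. -/
open Filter Set Topology Pointwise

universe u v

/-- A P-space: countable intersections of open sets are open. -/
def IsPSpace (X : Type*) [TopologicalSpace X] : Prop :=
  ∀ s : ℕ → Set X, (∀ n, IsOpen (s n)) → IsOpen (⋂ n, s n)

/-- A uniform P-space: countable intersections of entourages are entourages. -/
def IsUniformPSpace (X : Type*) [UniformSpace X] : Prop :=
  ∀ s : ℕ → Set (X × X), (∀ n, s n ∈ uniformity X) → (⋂ n, s n) ∈ uniformity X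

/-- The left uniformity of a topological group, as a filter on `G × G`. -/
def leftUnif (G : Type*) [Group G] [TopologicalSpace G] : Filter (G × G) :=
  Filter.comap (fun p : G × G => p.1⁻¹ * p.2) (nhds 1)

/-- The right uniformity of a topological group, as a filter on `G × G`. -/
def rightUnif (G : Type*) [Group G] [TopologicalSpace G] : Filter (G × G) :=
  Filter.comap (fun p : G × G => p.1 * p.2⁻¹) (nhds 1)

/-- The two-sided uniformity (supremum of left and right uniformities). -/
def twoSidedUnif (G : Type*) [Group G] [TopologicalSpace G] : Filter (G × G) :=
  leftUnif G ⊓ rightUnif G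

/-- `ε` belongs to the trace of the filter `μ` on the subset `B`. -/
def MemTrace {G : Type*} (μ : Filter (G × G)) (B : Set G) (ε : Set (G × G)) : Prop :=
  ∃ δ ∈ μ, δ ∩ B ×ˢ B = ε ∩ B ×ˢ B

/-- `f : B → ℝ` is uniformly continuous for the trace on `B` of the filter `μ` on `G × G`. -/
def UCOn {G : Type*} (μ : Filter (G × G)) (B : Set G) (f : B → ℝ) : Prop :=
  ∀ e : ℝ, 0 < e → ∃ δ ∈ μ, ∀ x y : B, ((x : G), (y : G)) ∈ δ → |f x - f y| < e

/-- `ε` is an equivalence relation on the subset `B`. -/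
def IsEquivOn {G : Type*} (B : Set G) (ε : Set (G × G)) : Prop :=
  (∀ x ∈ B, (x, x) ∈ ε) ∧ (∀ x ∈ B, ∀ y ∈ B, (x, y) ∈ ε → (y, x) ∈ ε) ∧
    (∀ x ∈ B, ∀ y ∈ B, ∀ z ∈ B, (x, y) ∈ ε → (y, z) ∈ ε → (x, z) ∈ ε)

/-- The relation `ε` has at most `c` equivalence classes on `B`. -/
def ClassesLE {G : Type*} (B : Set G) (ε : Set (G × G)) (c : Cardinal) : Prop :=
  Cardinal.mk ↥(Set.range fun x : B => {y : B | ((x : G), (y : G)) ∈ ε}) ≤ c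

/-- The symmetric subset `B` of a topological group `G` is functionally balanced. -/
def FunBalancedOn (G : Type*) [Group G] [TopologicalSpace G] (B : Set G) : Prop :=
  ∀ f : B → ℝ, (∃ M : ℝ, ∀ x : B, |f x| ≤ M) →
    UCOn (leftUnif G) B f → UCOn (rightUnif G) B f

/-- The symmetric subset `B` of a topological group `G` is strongly functionally balanced. -/
def StronglyFunBalancedOn (G : Type*) [Group G] [TopologicalSpace G] (B : Set G) : Prop :=
  ∀ f : B → ℝ, UCOn (leftUnif G) B f → UCOn (rightUnif G) B f

/-- A non-archimedean topological group: open subgroups form a base at the identity. -/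
def IsNonArchGroup (G : Type*) [Group G] [TopologicalSpace G] : Prop :=
  ∀ U ∈ nhds (1 : G), ∃ H : Subgroup G, IsOpen (H : Set G) ∧ (H : Set G) ⊆ U

/-- Words of length at most `n` in the free group. -/
def Bword (X : Type*) [DecidableEq X] (n : ℕ) : Set (FreeGroup X) :=
  {w : FreeGroup X | w.toWord.length ≤ n}

/-- The given group topology on `FreeGroup X` makes it the uniform free topological group
over the uniform space `X`: the canonical map is uniformly continuous (for the two-sided
uniformity) and every uniformly continuous map to a topological group extends to a
continuous homomorphism. -/
def IsUniformFreeTopGroup (X : Type u) [UniformSpace X] [TopologicalSpace (FreeGroup X)]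
    [IsTopologicalGroup (FreeGroup X)] : Prop :=
  Filter.Tendsto (Prod.map (FreeGroup.of : X → FreeGroup X) FreeGroup.of) (uniformity X)
      (twoSidedUnif (FreeGroup X)) ∧
    ∀ (G : Type u) [Group G] [TopologicalSpace G] [IsTopologicalGroup G] (φ : X → G),
      Filter.Tendsto (Prod.map φ φ) (uniformity X) (twoSidedUnif G) →
        Continuous ⇑(FreeGroup.lift φ)

/-- The given group topology on `FreeGroup X` makes it the free non-archimedean balanced
topological group over the uniform space `X`. -/
def IsFreeNABalancedGroup (X : Type u) [UniformSpace X] [TopologicalSpace (FreeGroup X)]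
    [IsTopologicalGroup (FreeGroup X)] : Prop :=
  IsNonArchGroup (FreeGroup X) ∧ leftUnif (FreeGroup X) = rightUnif (FreeGroup X) ∧
    Filter.Tendsto (Prod.map (FreeGroup.of : X → FreeGroup X) FreeGroup.of) (uniformity X)
      (twoSidedUnif (FreeGroup X)) ∧
    ∀ (G : Type u) [Group G] [TopologicalSpace G] [IsTopologicalGroup G] (φ : X → G),
      IsNonArchGroup G → leftUnif G = rightUnif G →
      Filter.Tendsto (Prod.map φ φ) (uniformity X) (twoSidedUnif G) →
        Continuous ⇑(FreeGroup.lift φ)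

/-!
In a P-group the right uniformity is closed under countable intersections, so a right uniformly
continuous real function is constant on a single entourage: intersect the entourages witnessing
the tolerances `1 / (n + 1)`. If `f` is left uniformly continuous, the bounded function
`arctan ∘ f` is left, hence right, uniformly continuous, so it is constant on a right entourage,
and so is `f` because `arctan` is injective.
-/

namespace IsPSpace

variable {X : Type*} [TopologicalSpace X]

lemma isOpen_sInter (hP : IsPSpace X) {S : Set (Set X)} (hS : S.Countable)
    (hSo : ∀ s ∈ S, IsOpen s) : IsOpen (⋂₀ S) := by
  rcases S.eq_empty_or_nonempty with rfl | hne
  · simp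
  obtain ⟨s, rfl⟩ := hS.exists_eq_range hne
  rw [sInter_range]
  exact hP s fun n => hSo _ (mem_range_self n)

lemma countableInterFilter_nhds (hP : IsPSpace X) (x : X) : CountableInterFilter (𝓝 x) where
  countable_sInter_mem S hS hSx := by
    choose! t htS hto hxt using fun s hs => mem_nhds_iff.1 (hSx s hs)
    refine mem_nhds_iff.2 ⟨⋂₀ (t '' S), ?_, hP.isOpen_sInter (hS.image t) ?_, ?_⟩
    · exact fun y hy s hs => htS s hs (hy _ (mem_image_of_mem t hs))
    · rintro _ ⟨s, hs, rfl⟩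
      exact hto s hs
    · simpa using hxt

lemma countableInterFilter_rightUnif {G : Type*} [Group G] [TopologicalSpace G]
    (hP : IsPSpace G) : CountableInterFilter (rightUnif G) := by
  have := hP.countableInterFilter_nhds 1
  unfold rightUnif
  infer_instance

end IsPSpace

section UCOn

variable {G : Type*} {μ : Filter (G × G)} {B : Set G} {f : B → ℝ}

lemma UCOn.comp {g : ℝ → ℝ} (hg : UniformContinuous g) (hf : UCOn μ B f) :
    UCOn μ B (g ∘ f) := by
  intro e he
  obtain ⟨d, hd, hgd⟩ := Metric.uniformContinuous_iff.1 hg e he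
  obtain ⟨δ, hδ, hfδ⟩ := hf d hd
  exact ⟨δ, hδ, fun x y hxy => hgd (hfδ x y hxy)⟩

lemma ucOn_of_forall_mem_eq {δ : Set (G × G)} (hδ : δ ∈ μ)
    (hf : ∀ x y : B, ((x : G), (y : G)) ∈ δ → f x = f y) : UCOn μ B f :=
  fun e he => ⟨δ, hδ, fun x y hxy => by simpa [hf x y hxy] using he⟩

lemma UCOn.exists_mem_forall_eq [CountableInterFilter μ] (hf : UCOn μ B f) :
    ∃ δ ∈ μ, ∀ x y : B, ((x : G), (y : G)) ∈ δ → f x = f y := by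
  choose δ hδμ hδ using fun n : ℕ => hf (1 / (n + 1)) Nat.one_div_pos_of_nat
  refine ⟨⋂ n, δ n, countable_iInter_mem.2 hδμ, fun x y hxy => ?_⟩
  by_contra hne
  obtain ⟨n, hn⟩ := exists_nat_one_div_lt (abs_pos.2 (sub_ne_zero.2 hne))
  exact (hδ n x y (mem_iInter.1 hxy n)).not_ge hn.le

lemma UCOn.of_comp_injective [CountableInterFilter μ] {g : ℝ → ℝ} (hg : g.Injective)
    (hgf : UCOn μ B (g ∘ f)) : UCOn μ B f := by
  obtain ⟨δ, hδ, hgfδ⟩ := hgf.exists_mem_forall_eq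
  exact ucOn_of_forall_mem_eq hδ fun x y hxy => hg (hgfδ x y hxy)

end UCOn

lemma Real.lipschitzWith_one_arctan : LipschitzWith 1 Real.arctan := by
  refine lipschitzWith_of_nnnorm_deriv_le Real.differentiable_arctan fun x => ?_
  rw [Real.deriv_arctan, ← NNReal.coe_le_coe, coe_nnnorm, Real.norm_eq_abs,
    abs_of_pos (by positivity), NNReal.coe_one, div_le_one (by positivity)]
  nlinarith [sq_nonneg x]

lemma Real.abs_arctan_le (x : ℝ) : |Real.arctan x| ≤ Real.pi / 2 :=
  abs_le.2 ⟨(Real.neg_pi_div_two_lt_arctan x).le, (Real.arctan_lt_pi_div_two x).le⟩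

theorem pGroup_funBalanced_iff_strong_general (G : Type*) [Group G] [TopologicalSpace G]
    (hP : IsPSpace G) :
    FunBalancedOn G Set.univ ↔ StronglyFunBalancedOn G Set.univ := by
  refine ⟨fun hFB f hf => ?_, fun hS f _ hf => hS f hf⟩
  have := hP.countableInterFilter_rightUnif
  exact (hFB _ ⟨_, fun x => Real.abs_arctan_le (f x)⟩
    (hf.comp Real.lipschitzWith_one_arctan.uniformContinuous)).of_comp_injective
    Real.arctan_injective

/-- a P-group is functionally balanced iff it is strongly functionally
balanced. -/
theorem pGroup_funBalanced_iff_strong (G : Type*) [Group G] [TopologicalSpace G]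
    [IsTopologicalGroup G] (hP : IsPSpace G) :
    FunBalancedOn G Set.univ ↔ StronglyFunBalancedOn G Set.univ :=
  pGroup_funBalanced_iff_strong_general G hP
end

section
/- Let (X, U) be a uniform P-space and G = F(X, U) the uniform free topological group, with Bₙ the words of length ≤ n. Then the following are equivalent: (1) every Bₙ is strongly functionally balanced; (2) every Bₙ is functionally balanced; (3) G is functionally balanced; (4) G is strongly functionally balanced. -/
open Filter Set Topology Pointwise

universe u v

/-!
Over a uniform P-space, `F(X, U)` is a P-group: the countable-intersection modification of its
topology is again a group topology for which `X → F(X, U)` is uniformly continuous, so by the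
universal property it is coarser than, hence equal to, the original one. In a P-group a
uniformly continuous real function is constant on the pairs of some entourage (intersect the
entourages for the errors `1/(n+1)`), and every neighbourhood of `1` contains an open subgroup.
Hence composing with `arctan` removes boundedness, a function on `Bₙ` that is left uniformly
continuous extends to `F(X, U)` along the left cosets of an open subgroup, and the countably
many right entourages obtained on the balls `Bₙ` intersect to one right entourage on `F(X, U)`.
-/

theorem IsUniformPSpace.countableInterFilter {X : Type*} [UniformSpace X]
    (hP : IsUniformPSpace X) : CountableInterFilter (uniformity X) := by
  refine ⟨fun S hS hSU => ?_⟩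
  rcases S.eq_empty_or_nonempty with rfl | hne
  · simp
  obtain ⟨s, rfl⟩ := hS.exists_eq_range hne
  rw [sInter_range]
  exact hP s fun n => hSU _ (mem_range_self n)

namespace Filter

theorem countableGenerate_sets_le {α : Type*} (l : Filter α) : countableGenerate l.sets ≤ l :=
  fun _ hs => (countableGenerate_isGreatest l.sets).1.2 hs

theorem Tendsto.countableGenerate_sets {α β : Type*} {l₁ : Filter α} [CountableInterFilter l₁]
    {l₂ : Filter β} {f : α → β} (h : Tendsto f l₁ l₂) :
    Tendsto f l₁ (countableGenerate l₂.sets) :=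
  le_countableGenerate_iff_of_countableInterFilter.2 h

end Filter

theorem ucOn_iff_exists_mem_forall_eq {G : Type*} {μ : Filter (G × G)} [CountableInterFilter μ]
    {B : Set G} {f : B → ℝ} :
    UCOn μ B f ↔ ∃ δ ∈ μ, ∀ x y : B, ((x : G), (y : G)) ∈ δ → f x = f y := by
  constructor
  · intro hf
    choose δ hδ hfδ using fun n : ℕ => hf (1 / (n + 1)) Nat.one_div_pos_of_nat
    refine ⟨⋂ n, δ n, countable_iInter_mem.2 hδ, fun x y hxy => ?_⟩
    refine eq_of_forall_dist_le fun ε hε => ?_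
    obtain ⟨n, hn⟩ := exists_nat_one_div_lt hε
    rw [Real.dist_eq]
    exact (hfδ n x y (mem_iInter.1 hxy n)).le.trans hn.le
  · rintro ⟨δ, hδ, hfδ⟩ e he
    exact ⟨δ, hδ, fun x y hxy => by simpa [hfδ x y hxy] using he⟩

theorem exists_extend_of_forall_inv_mul_mem {G β : Type*} [Group G] [Nonempty β]
    {H : Subgroup G} {B : Set G} {f : B → β} (hf : ∀ x y : B, (x : G)⁻¹ * y ∈ H → f x = f y) :
    ∃ F : G → β, (∀ x y : G, x⁻¹ * y ∈ H → F x = F y) ∧ ∀ x : B, F x = f x := by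
  have hfac : f.FactorsThrough fun x : B => ((x : G) : G ⧸ H) :=
    fun x y hxy => hf x y (QuotientGroup.eq.1 hxy)
  refine ⟨Function.extend (fun x : B => ((x : G) : G ⧸ H)) f (fun _ => Classical.arbitrary β) ∘
    (↑), fun x y hxy => ?_, hfac.extend_apply _⟩
  simp only [Function.comp_apply, QuotientGroup.eq.2 hxy]

section PGroup

variable {G : Type*} [Group G] [TopologicalSpace G] [CountableInterFilter (𝓝 (1 : G))]

instance : CountableInterFilter (leftUnif G) :=
  inferInstanceAs (CountableInterFilter (comap _ _))

instance : CountableInterFilter (rightUnif G) :=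
  inferInstanceAs (CountableInterFilter (comap _ _))

theorem exists_subgroup_mem_nhds_one_subset [IsTopologicalGroup G] {U : Set G}
    (hU : U ∈ 𝓝 (1 : G)) : ∃ H : Subgroup G, (H : Set G) ∈ 𝓝 (1 : G) ∧ (H : Set G) ⊆ U := by
  have hshrink : ∀ s : (𝓝 (1 : G)).sets, ∃ t : (𝓝 (1 : G)).sets,
      (t : Set G)⁻¹ = t ∧ (t : Set G) * t ⊆ s := fun s => by
    obtain ⟨t, ht, -, htinv, htmul⟩ := exists_closed_nhds_one_inv_eq_mul_subset s.2
    exact ⟨⟨t, ht⟩, htinv, htmul⟩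
  choose shrink hinv hmul using hshrink
  let W : ℕ → (𝓝 (1 : G)).sets := fun n => shrink^[n] ⟨U, hU⟩
  have hW : ∀ n, W (n + 1) = shrink (W n) := fun n => Function.iterate_succ_apply' _ _ _
  let H : Subgroup G :=
    { carrier := ⋂ n, (W (n + 1) : Set G)
      one_mem' := mem_iInter.2 fun n => mem_of_mem_nhds (W (n + 1)).2
      mul_mem' := fun {a b} ha hb => mem_iInter.2 fun n => by
        have hab := mul_mem_mul (mem_iInter.1 ha (n + 1)) (mem_iInter.1 hb (n + 1))
        rw [hW (n + 1)] at hab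
        exact hmul _ hab
      inv_mem' := fun {a} ha => mem_iInter.2 fun n => by
        rw [hW n, ← hinv (W n), Set.inv_mem_inv]
        exact hW n ▸ mem_iInter.1 ha n }
  refine ⟨H, countable_iInter_mem.2 fun n => (W (n + 1)).2, fun a ha => ?_⟩
  exact hmul (W 0) (subset_mul_left _ (mem_of_mem_nhds (shrink (W 0)).2)
    (hW 0 ▸ mem_iInter.1 ha 0))

theorem funBalancedOn_iff_stronglyFunBalancedOn (B : Set G) :
    FunBalancedOn G B ↔ StronglyFunBalancedOn G B := by
  refine ⟨fun h f hf => ?_, fun h f _ => h f⟩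
  obtain ⟨δ, hδ, hfδ⟩ := ucOn_iff_exists_mem_forall_eq.1 hf
  have harctan : UCOn (rightUnif G) B (Real.arctan ∘ f) :=
    h _ ⟨Real.pi / 2, fun x => (abs_lt.2 ⟨Real.neg_pi_div_two_lt_arctan _,
      Real.arctan_lt_pi_div_two _⟩).le⟩
      (ucOn_iff_exists_mem_forall_eq.2 ⟨δ, hδ, fun x y hxy => congrArg Real.arctan (hfδ x y hxy)⟩)
  obtain ⟨δ', hδ', hfδ'⟩ := ucOn_iff_exists_mem_forall_eq.1 harctan
  exact ucOn_iff_exists_mem_forall_eq.2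
    ⟨δ', hδ', fun x y hxy => Real.arctan_injective (hfδ' x y hxy)⟩

theorem StronglyFunBalancedOn.of_univ [IsTopologicalGroup G]
    (h : StronglyFunBalancedOn G univ) (B : Set G) : StronglyFunBalancedOn G B := by
  intro f hf
  obtain ⟨δ, hδ, hfδ⟩ := ucOn_iff_exists_mem_forall_eq.1 hf
  obtain ⟨U, hU, hUδ⟩ := mem_comap.1 hδ
  obtain ⟨H, hH, hHU⟩ := exists_subgroup_mem_nhds_one_subset hU
  obtain ⟨F, hFH, hFf⟩ := exists_extend_of_forall_inv_mul_mem (H := H) (f := f)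
    fun x y hxy => hfδ x y (hUδ (hHU hxy))
  have hF : UCOn (leftUnif G) univ fun w => F w :=
    ucOn_iff_exists_mem_forall_eq.2 ⟨_, preimage_mem_comap hH, fun x y hxy => hFH x y hxy⟩
  obtain ⟨δ', hδ', hFδ'⟩ := ucOn_iff_exists_mem_forall_eq.1 (h _ hF)
  refine ucOn_iff_exists_mem_forall_eq.2 ⟨δ', hδ', fun x y hxy => ?_⟩
  rw [← hFf, ← hFf]
  exact hFδ' ⟨x, trivial⟩ ⟨y, trivial⟩ hxy

theorem stronglyFunBalancedOn_univ_of_seq (B : ℕ → Set G)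
    (hB : ∀ x y : G, ∃ n, x ∈ B n ∧ y ∈ B n) (h : ∀ n, StronglyFunBalancedOn G (B n)) :
    StronglyFunBalancedOn G univ := by
  intro f hf
  obtain ⟨δ, hδ, hfδ⟩ := ucOn_iff_exists_mem_forall_eq.1 hf
  have hres : ∀ n, ∃ δ' ∈ rightUnif G, ∀ x y : B n, ((x : G), (y : G)) ∈ δ' →
      f ⟨x, trivial⟩ = f ⟨y, trivial⟩ := fun n =>
    ucOn_iff_exists_mem_forall_eq.1
      (h n _ (ucOn_iff_exists_mem_forall_eq.2 ⟨δ, hδ, fun x y hxy => hfδ _ _ hxy⟩))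
  choose δ' hδ' hfδ' using hres
  refine ucOn_iff_exists_mem_forall_eq.2 ⟨⋂ n, δ' n, countable_iInter_mem.2 hδ', fun x y hxy => ?_⟩
  obtain ⟨n, hx, hy⟩ := hB x y
  exact hfδ' n ⟨x, hx⟩ ⟨y, hy⟩ (mem_iInter.1 hxy n)

end PGroup

/-- The group filter basis of the P-modification of the topology of `G`. -/
abbrev countableGenerateNhdsOneBasis (G : Type*) [Group G] [TopologicalSpace G]
    [IsTopologicalGroup G] : GroupFilterBasis G :=
  let 𝓕 := countableGenerate (𝓝 (1 : G)).sets
  have h𝓕 : 𝓕 ≤ 𝓝 1 := countableGenerate_sets_le _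
  have hone : 𝓟 {1} ≤ 𝓕 := le_countableGenerate_iff_of_countableInterFilter.2
    fun _ hs => singleton_subset_iff.2 (mem_of_mem_nhds hs)
  have hmul : Tendsto (fun p : G × G => p.1 * p.2) (𝓕 ×ˢ 𝓕) 𝓕 := by
    have : CountableInterFilter (𝓕 ×ˢ 𝓕) := by rw [prod_eq_inf]; infer_instance
    have h : Tendsto (fun p : G × G => p.1 * p.2) (𝓝 1 ×ˢ 𝓝 1) (𝓝 1) := by
      simpa [nhds_prod_eq] using continuous_mul.tendsto ((1 : G), (1 : G))
    exact (h.mono_left (Filter.prod_mono h𝓕 h𝓕)).countableGenerate_sets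
  { 𝓕.asBasis with
    one' := fun hU => hone hU rfl
    mul' := fun hU => by
      obtain ⟨V, hV, hVU⟩ := mem_prod_self_iff.1 (hmul hU)
      exact ⟨V, hV, by rintro _ ⟨a, ha, b, hb, rfl⟩; exact hVU (mk_mem_prod ha hb)⟩
    inv' := fun hU => ⟨_, ((continuous_inv.tendsto' (1 : G) 1 inv_one).mono_left
      h𝓕).countableGenerate_sets hU, subset_rfl⟩
    conj' := fun x₀ _ hU => by
      have h : Tendsto (fun x => x₀ * x * x₀⁻¹) (𝓝 (1 : G)) (𝓝 1) :=
        (by fun_prop : Continuous fun x => x₀ * x * x₀⁻¹).tendsto' 1 1 (by simp)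
      exact ⟨_, (h.mono_left h𝓕).countableGenerate_sets hU, subset_rfl⟩ }

theorem nhds_one_countableGenerateNhdsOneBasis (G : Type*) [Group G] [TopologicalSpace G]
    [IsTopologicalGroup G] :
    @nhds G (countableGenerateNhdsOneBasis G).topology 1 = countableGenerate (𝓝 (1 : G)).sets := by
  rw [GroupFilterBasis.nhds_one_eq]
  ext s
  exact ⟨fun ⟨t, ht, hts⟩ => mem_of_superset (ht : t ∈ countableGenerate _) hts,
    fun hs => ⟨s, hs, subset_rfl⟩⟩

theorem IsUniformFreeTopGroup.countableInterFilter_nhds_one {X : Type u} [UniformSpace X]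
    [TopologicalSpace (FreeGroup X)] [IsTopologicalGroup (FreeGroup X)]
    (hP : IsUniformPSpace X) (hF : IsUniformFreeTopGroup X) :
    CountableInterFilter (𝓝 (1 : FreeGroup X)) := by
  have := hP.countableInterFilter
  have hτ := nhds_one_countableGenerateNhdsOneBasis (FreeGroup X)
  have hof : Tendsto (Prod.map FreeGroup.of FreeGroup.of) (uniformity X)
      (@twoSidedUnif (FreeGroup X) _ (countableGenerateNhdsOneBasis (FreeGroup X)).topology) := by
    have h := hF.1
    simp only [twoSidedUnif, leftUnif, rightUnif, tendsto_inf, tendsto_comap_iff] at h ⊢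
    rw [hτ]
    exact ⟨h.1.countableGenerate_sets, h.2.countableGenerate_sets⟩
  have hle : ‹TopologicalSpace (FreeGroup X)› ≤
      (countableGenerateNhdsOneBasis (FreeGroup X)).topology := by
    have h := @hF.2 (FreeGroup X) _ (countableGenerateNhdsOneBasis _).topology
      (countableGenerateNhdsOneBasis _).isTopologicalGroup FreeGroup.of hof
    rw [FreeGroup.lift_of_eq_id] at h
    exact continuous_id_iff_le.1 h
  have hnhds : 𝓝 (1 : FreeGroup X) = countableGenerate (𝓝 (1 : FreeGroup X)).sets :=
    le_antisymm (hτ ▸ nhds_mono hle) (countableGenerate_sets_le _)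
  rw [hnhds]
  infer_instance

/-- over a uniform P-space, the uniform free topological group is
(strongly) functionally balanced iff every ball `Bₙ` is (strongly) functionally balanced. -/
theorem uniformFree_funBalanced_tfae (X : Type u) [UniformSpace X] [DecidableEq X]
    [TopologicalSpace (FreeGroup X)] [IsTopologicalGroup (FreeGroup X)]
    (hP : IsUniformPSpace X) (hF : IsUniformFreeTopGroup X) :
    ((∀ n : ℕ, StronglyFunBalancedOn (FreeGroup X) (Bword X n)) ↔
      (∀ n : ℕ, FunBalancedOn (FreeGroup X) (Bword X n))) ∧
    ((∀ n : ℕ, FunBalancedOn (FreeGroup X) (Bword X n)) ↔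
      FunBalancedOn (FreeGroup X) Set.univ) ∧
    (FunBalancedOn (FreeGroup X) Set.univ ↔
      StronglyFunBalancedOn (FreeGroup X) Set.univ) := by
  have := hF.countableInterFilter_nhds_one hP
  have hballs : (∀ n, StronglyFunBalancedOn (FreeGroup X) (Bword X n)) ↔
      StronglyFunBalancedOn (FreeGroup X) univ :=
    ⟨stronglyFunBalancedOn_univ_of_seq _ fun x y =>
        ⟨max x.toWord.length y.toWord.length, (le_max_left _ _ : x.toWord.length ≤ _),
          (le_max_right _ _ : y.toWord.length ≤ _)⟩,
      fun h _ => h.of_univ _⟩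
  simpa only [funBalancedOn_iff_stronglyFunBalancedOn, true_and, and_true] using hballs
end
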